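/- Let T be a finite tree rooted at a vertex v with deg(v) ≥ 2, and suppose T = T₁ ∪_v T₂, i.e., T₁ and T₂ are subtrees of T each containing v and each having at least two vertices, whose vertex sets have union equal to the vertex set of T and intersection equal to {v}. If both rooted trees (T₁, v) and (T₂, v) satisfy N_v^{(i)} N_{Tᵢ} − (N_v^{(i)})² + N_{Tᵢ} − N_v^{(i)} ≥ 3(R_{Tᵢ} − R_v^{(i)}) (where the superscript (i) indicates the quantities computed in Tᵢ), then (T, v) satisfies N_v N_T − N_v² + N_T − N_v ≥ 3(R_T − R_v). -/

import Mathlib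

variable {V : Type*}

/-- A subtree of a graph: a nonempty set of vertices inducing a connected subgraph. -/
def IsSubtree (G : SimpleGraph V) (s : Finset V) : Prop :=
  s.Nonempty ∧ (G.induce (s : Set V)).Connected

open Classical in
/-- `N_T`: the number of subtrees of `G`. -/
noncomputable def numSubtrees [Fintype V] (G : SimpleGraph V) : ℕ :=
  (Finset.univ.filter fun s : Finset V => IsSubtree G s).card

open Classical in
/-- `R_T`: the sum of the orders of all subtrees of `G`. -/
noncomputable def sumSubtrees [Fintype V] (G : SimpleGraph V) : ℕ :=
  ∑ s ∈ Finset.univ.filter (fun s : Finset V => IsSubtree G s), s.card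

open Classical in
/-- `N_v`: the number of subtrees of `G` containing `v`. -/
noncomputable def numSubtreesAt [Fintype V] (G : SimpleGraph V) (v : V) : ℕ :=
  (Finset.univ.filter fun s : Finset V => IsSubtree G s ∧ v ∈ s).card

open Classical in
/-- `R_v`: the sum of the orders of all subtrees of `G` containing `v`. -/
noncomputable def sumSubtreesAt [Fintype V] (G : SimpleGraph V) (v : V) : ℕ :=
  ∑ s ∈ Finset.univ.filter (fun s : Finset V => IsSubtree G s ∧ v ∈ s), s.card

/-- `μ_T`: the mean subtree order (global mean) of `G`. -/
noncomputable def meanSubtreeOrder [Fintype V] (G : SimpleGraph V) : ℚ :=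
  (sumSubtrees G : ℚ) / (numSubtrees G : ℚ)

/-- `μ_T(v)`: the local mean of `G` at `v`. -/
noncomputable def localMean [Fintype V] (G : SimpleGraph V) (v : V) : ℚ :=
  (sumSubtreesAt G v : ℚ) / (numSubtreesAt G v : ℚ)

/-- The tree obtained by contracting the edge `uv`: the vertex `v` is merged into `u`. -/
def contractEdge (G : SimpleGraph V) (u v : V) : SimpleGraph {x : V // x ≠ v} where
  Adj a b := a ≠ b ∧ (G.Adj a.1 b.1 ∨ (a.1 = u ∧ G.Adj v b.1) ∨ (b.1 = u ∧ G.Adj v a.1))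
  symm := by
    constructor
    rintro a b ⟨hne, h⟩
    refine ⟨hne.symm, ?_⟩
    rcases h with h | h | h
    · exact Or.inl h.symm
    · exact Or.inr (Or.inr h)
    · exact Or.inr (Or.inl h)
  loopless := by constructor; rintro a ⟨hne, -⟩; exact hne rfl

/-!
Put `d = N_T - N_v` and `B = R_T - R_v`, the number and the total order of the subtrees avoiding
`v`. The inequality for `(T, v)` is `3 B ≤ (N_v + 1) d`. Since `v` is a cut vertex separating
`T₁` from `T₂`, a subtree through `v` is the union of a subtree of `T₁` through `v` and one of `T₂`
through `v` (the pieces are recovered by intersecting with `T₁` and `T₂`, which keeps them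
connected in a tree), so `N_v = N_v⁽¹⁾ N_v⁽²⁾`; a subtree avoiding `v` lies in `T₁` or in `T₂`, so
`d = d₁ + d₂` and `B = B₁ + B₂`. Hence
`3 B ≤ (N_v⁽¹⁾ + 1) d₁ + (N_v⁽²⁾ + 1) d₂ ≤ (N_v⁽¹⁾ N_v⁽²⁾ + 1) (d₁ + d₂)`, as `N_v⁽ⁱ⁾ ≥ 1`.
-/

open Finset SimpleGraph

namespace SimpleGraph

variable {G : SimpleGraph V}

theorem Walk.IsPath.append {x v y : V} {p : G.Walk x v} {q : G.Walk v y} (hp : p.IsPath)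
    (hq : q.IsPath) (hpq : ∀ z ∈ p.support, z ∈ q.support → z = v) : (p.append q).IsPath := by
  have hq' := List.nodup_cons.1 (q.cons_tail_support ▸ hq.support_nodup)
  rw [Walk.isPath_def, Walk.support_append, List.nodup_append]
  refine ⟨hp.support_nodup, hq'.2, fun a ha b hb hab => hq'.1 ?_⟩
  subst hab
  exact hpq a ha (List.mem_of_mem_tail hb) ▸ hb

theorem reachable_of_preconnected_induce {s : Set V} (hs : (G.induce s).Preconnected)
    {x y : V} (hx : x ∈ s) (hy : y ∈ s) : G.Reachable x y :=
  (hs ⟨x, hx⟩ ⟨y, hy⟩).map (Embedding.induce s).toHom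

theorem IsAcyclic.support_subset_of_preconnected_induce [DecidableEq V] (hG : G.IsAcyclic)
    {s : Set V} (hs : (G.induce s).Preconnected) {x y : V} (hx : x ∈ s) (hy : y ∈ s)
    {p : G.Walk x y} (hp : p.IsPath) : ∀ z ∈ p.support, z ∈ s := by
  obtain ⟨w⟩ := hs ⟨x, hx⟩ ⟨y, hy⟩
  let q : G.Walk x y := w.map (Embedding.induce s).toHom
  have hpq : p = q.bypass := congrArg Subtype.val <|
    (hG.subsingleton_path x y).elim ⟨p, hp⟩ ⟨_, q.bypass_isPath⟩
  intro z hz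
  have hzq : z ∈ (w.map (Embedding.induce s).toHom).support :=
    q.support_bypass_subset_support (hpq ▸ hz)
  rw [Walk.support_map] at hzq
  obtain ⟨a, -, rfl⟩ := List.mem_map.1 hzq
  exact a.2

end SimpleGraph

section IsSubtree

variable {G : SimpleGraph V}

theorem isSubtree_singleton (G : SimpleGraph V) (v : V) : IsSubtree G {v} :=
  ⟨singleton_nonempty v, coe_singleton v ▸ Connected.of_subsingleton⟩

theorem isSubtree_induce_iff {s : Set V} {t : Finset s} :
    IsSubtree (G.induce s) t ↔ IsSubtree G (t.map (Function.Embedding.subtype _)) := by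
  let e : (G.induce s).induce (t : Set s) ≃g G.induce (t.map (Function.Embedding.subtype _)) :=
    { toEquiv := (Equiv.Set.image Subtype.val _ Subtype.val_injective).trans
        (Equiv.setCongr (coe_map (Function.Embedding.subtype (· ∈ s)) t).symm)
      map_rel_iff' := Iff.rfl }
  rw [IsSubtree, IsSubtree, map_nonempty, e.connected_iff]

variable [DecidableEq V]

theorem IsSubtree.union {s t : Finset V} {v : V} (hs : IsSubtree G s) (ht : IsSubtree G t)
    (hvs : v ∈ s) (hvt : v ∈ t) : IsSubtree G (s ∪ t) :=
  ⟨hs.1.mono subset_union_left, coe_union s t ▸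
    induce_union_connected hs.2.preconnected ht.2.preconnected ⟨v, hvs, hvt⟩⟩

theorem IsSubtree.inter (hG : G.IsAcyclic) {s t : Finset V} (hs : IsSubtree G s)
    (ht : IsSubtree G t) (hst : (s ∩ t).Nonempty) : IsSubtree G (s ∩ t) := by
  obtain ⟨x, hx⟩ := hst
  refine ⟨⟨x, hx⟩, induce_connected_of_patches x hx fun {y} hy => ?_⟩
  rw [mem_coe] at hy
  rw [mem_inter] at hx hy
  obtain ⟨p, hp⟩ := (reachable_of_preconnected_induce hs.2.preconnected hx.1 hy.1).exists_isPath
  have hps := hG.support_subset_of_preconnected_induce hs.2.preconnected hx.1 hy.1 hp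
  have hpt := hG.support_subset_of_preconnected_induce ht.2.preconnected hx.2 hy.2 hp
  refine ⟨{z | z ∈ p.support}, fun z hz => ?_, p.start_mem_support, p.end_mem_support,
    p.connected_induce_support.preconnected _ _⟩
  exact mem_coe.2 (mem_inter.2 ⟨hps z hz, hpt z hz⟩)

end IsSubtree

section Subtrees

variable [Fintype V] {G : SimpleGraph V}

open Classical in
noncomputable def subtrees (G : SimpleGraph V) : Finset (Finset V) :=
  univ.filter fun s => IsSubtree G s

@[simp]
theorem mem_subtrees {s : Finset V} : s ∈ subtrees G ↔ IsSubtree G s := by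
  simp [subtrees]

variable [DecidableEq V]

theorem numSubtreesAt_eq_card (G : SimpleGraph V) (v : V) :
    numSubtreesAt G v = #{s ∈ subtrees G | v ∈ s} := by
  rw [numSubtreesAt, subtrees, filter_filter]
  congr

theorem sumSubtreesAt_eq_sum (G : SimpleGraph V) (v : V) :
    sumSubtreesAt G v = ∑ s ∈ subtrees G with v ∈ s, #s := by
  rw [sumSubtreesAt, subtrees, filter_filter]
  congr

theorem numSubtrees_eq_add (G : SimpleGraph V) (v : V) :
    numSubtrees G = numSubtreesAt G v + #{s ∈ subtrees G | v ∉ s} := by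
  rw [numSubtreesAt_eq_card, card_filter_add_card_filter_not]
  rfl

theorem sumSubtrees_eq_add (G : SimpleGraph V) (v : V) :
    sumSubtrees G = sumSubtreesAt G v + ∑ s ∈ subtrees G with v ∉ s, #s := by
  rw [sumSubtreesAt_eq_sum, sum_filter_add_sum_filter_not]
  rfl

theorem subtree_ineq_iff (G : SimpleGraph V) (v : V) :
    (numSubtreesAt G v : ℤ) * numSubtrees G - (numSubtreesAt G v : ℤ) ^ 2
        + numSubtrees G - numSubtreesAt G v ≥ 3 * ((sumSubtrees G : ℤ) - sumSubtreesAt G v) ↔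
      3 * ∑ s ∈ subtrees G with v ∉ s, #s ≤
        (numSubtreesAt G v + 1) * #{s ∈ subtrees G | v ∉ s} := by
  rw [numSubtrees_eq_add G v, sumSubtrees_eq_add G v, ← Nat.cast_le (α := ℤ)]
  push_cast
  constructor <;> intro h <;> linarith

end Subtrees

section Induce

variable [Fintype V] [DecidableEq V] {G : SimpleGraph V}

theorem map_filter_subtrees_induce (s : Finset V) (P : Finset V → Prop) [DecidablePred P] :
    {t ∈ subtrees (G.induce s) | P (t.map (Function.Embedding.subtype _))}.map
        (mapEmbedding (Function.Embedding.subtype _)).toEmbedding =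
      {u ∈ subtrees G | u ⊆ s ∧ P u} := by
  ext u
  simp only [mem_map, mem_filter, mem_subtrees, RelEmbedding.coe_toEmbedding, mapEmbedding_apply]
  constructor
  · rintro ⟨t, ⟨ht, hP⟩, rfl⟩
    refine ⟨isSubtree_induce_iff.1 ht, fun x hx => ?_, hP⟩
    obtain ⟨y, -, rfl⟩ := mem_map.1 hx
    exact y.2
  · rintro ⟨hu, hus, hP⟩
    have hmap : (u.subtype (· ∈ (s : Set V))).map (Function.Embedding.subtype _) = u :=
      subtype_map_of_mem fun x hx => mem_coe.2 (hus hx)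
    exact ⟨_, ⟨isSubtree_induce_iff.2 (by rwa [hmap]), by rwa [hmap]⟩, hmap⟩

theorem card_filter_subtrees_induce (s : Finset V) (P : Finset V → Prop) [DecidablePred P] :
    #{t ∈ subtrees (G.induce s) | P (t.map (Function.Embedding.subtype _))} =
      #{u ∈ subtrees G | u ⊆ s ∧ P u} := by
  rw [← map_filter_subtrees_induce, card_map]

theorem sum_filter_subtrees_induce (s : Finset V) (P : Finset V → Prop) [DecidablePred P] :
    ∑ t ∈ subtrees (G.induce s) with P (t.map (Function.Embedding.subtype _)), #t =
      ∑ u ∈ subtrees G with u ⊆ s ∧ P u, #u := by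
  rw [← map_filter_subtrees_induce, sum_map]
  simp only [RelEmbedding.coe_toEmbedding, mapEmbedding_apply, card_map]

theorem subtree_ineq_induce_iff {v : V} {s : Finset V} (hv : v ∈ s) :
    letI r : (s : Set V) := ⟨v, hv⟩
    (numSubtreesAt (G.induce s) r : ℤ) * numSubtrees (G.induce s)
        - (numSubtreesAt (G.induce s) r : ℤ) ^ 2 + numSubtrees (G.induce s)
        - numSubtreesAt (G.induce s) r ≥
      3 * ((sumSubtrees (G.induce s) : ℤ) - sumSubtreesAt (G.induce s) r) ↔
    3 * ∑ u ∈ subtrees G with u ⊆ s ∧ v ∉ u, #u ≤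
      (#{u ∈ subtrees G | u ⊆ s ∧ v ∈ u} + 1) * #{u ∈ subtrees G | u ⊆ s ∧ v ∉ u} := by
  have hmem (t : Finset (s : Set V)) : ⟨v, hv⟩ ∈ t ↔ v ∈ t.map (Function.Embedding.subtype _) :=
    (mem_map' _).symm
  rw [subtree_ineq_iff, numSubtreesAt_eq_card]
  simp only [hmem]
  rw [card_filter_subtrees_induce s (v ∈ ·), card_filter_subtrees_induce s (v ∉ ·),
    sum_filter_subtrees_induce s (v ∉ ·)]

end Induce

section CutVertex

variable [Fintype V] [DecidableEq V] {G : SimpleGraph V} {v : V} {s₁ s₂ : Finset V}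

theorem IsSubtree.subset_or_subset_of_notMem (hG : G.IsAcyclic)
    (hs₁ : (G.induce s₁).Preconnected) (hs₂ : (G.induce s₂).Preconnected)
    (hunion : s₁ ∪ s₂ = univ) (hinter : s₁ ∩ s₂ = {v}) {u : Finset V} (hu : IsSubtree G u)
    (hvu : v ∉ u) : u ⊆ s₁ ∨ u ⊆ s₂ := by
  by_contra! h
  obtain ⟨x, hxu, hxs₁⟩ := not_subset.1 h.1
  obtain ⟨y, hyu, hys₂⟩ := not_subset.1 h.2
  have hv : v ∈ s₁ ∩ s₂ := hinter ▸ mem_singleton_self v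
  have hx : x ∈ s₂ := (mem_union.1 (hunion ▸ mem_univ x)).resolve_left hxs₁
  have hy : y ∈ s₁ := (mem_union.1 (hunion ▸ mem_univ y)).resolve_right hys₂
  obtain ⟨p, hp⟩ := (reachable_of_preconnected_induce hs₁ hy (mem_inter.1 hv).1).exists_isPath
  obtain ⟨q, hq⟩ := (reachable_of_preconnected_induce hs₂ (mem_inter.1 hv).2 hx).exists_isPath
  have hpq : (p.append q).IsPath := hp.append hq fun z hzp hzq => by
    have hz : z ∈ s₁ ∩ s₂ := mem_inter.2
      ⟨hG.support_subset_of_preconnected_induce hs₁ hy (mem_inter.1 hv).1 hp z hzp,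
        hG.support_subset_of_preconnected_induce hs₂ (mem_inter.1 hv).2 hx hq z hzq⟩
    rwa [hinter, mem_singleton] at hz
  exact hvu <| hG.support_subset_of_preconnected_induce hu.2.preconnected hyu hxu hpq v
    ((Walk.mem_support_append_iff p q).2 (Or.inl p.end_mem_support))

theorem filter_notMem_subtrees_eq_union (hG : G.IsAcyclic)
    (hs₁ : (G.induce s₁).Preconnected) (hs₂ : (G.induce s₂).Preconnected)
    (hunion : s₁ ∪ s₂ = univ) (hinter : s₁ ∩ s₂ = {v}) :
    {u ∈ subtrees G | v ∉ u} =
      {u ∈ subtrees G | u ⊆ s₁ ∧ v ∉ u} ∪ {u ∈ subtrees G | u ⊆ s₂ ∧ v ∉ u} := by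
  ext u
  simp only [mem_union, mem_filter, mem_subtrees]
  constructor
  · rintro ⟨hu, hvu⟩
    rcases hu.subset_or_subset_of_notMem hG hs₁ hs₂ hunion hinter hvu with h | h
    exacts [Or.inl ⟨hu, h, hvu⟩, Or.inr ⟨hu, h, hvu⟩]
  · rintro (⟨hu, -, hvu⟩ | ⟨hu, -, hvu⟩) <;> exact ⟨hu, hvu⟩

theorem disjoint_filter_notMem_subtrees (hinter : s₁ ∩ s₂ = {v}) :
    Disjoint {u ∈ subtrees G | u ⊆ s₁ ∧ v ∉ u} {u ∈ subtrees G | u ⊆ s₂ ∧ v ∉ u} := by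
  refine disjoint_filter.2 fun u hu ⟨hu₁, hvu⟩ ⟨hu₂, _⟩ => hvu ?_
  obtain ⟨x, hx⟩ := (mem_subtrees.1 hu).1
  have hxv : x ∈ s₁ ∩ s₂ := mem_inter.2 ⟨hu₁ hx, hu₂ hx⟩
  rw [hinter, mem_singleton] at hxv
  exact hxv ▸ hx

theorem card_filter_mem_subtrees_eq_mul (hG : G.IsAcyclic)
    (hs₁ : IsSubtree G s₁) (hs₂ : IsSubtree G s₂)
    (hunion : s₁ ∪ s₂ = univ) (hinter : s₁ ∩ s₂ = {v}) :
    #{u ∈ subtrees G | v ∈ u} =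
      #{u ∈ subtrees G | u ⊆ s₁ ∧ v ∈ u} * #{u ∈ subtrees G | u ⊆ s₂ ∧ v ∈ u} := by
  obtain ⟨hv₁, hv₂⟩ := mem_inter.1 (hinter ▸ mem_singleton_self v)
  rw [← card_product]
  refine card_nbij' (fun u => (u ∩ s₁, u ∩ s₂)) (fun p => p.1 ∪ p.2) ?_ ?_ ?_ ?_
  · intro u hu
    simp only [coe_filter, mem_subtrees, Set.mem_ofPred_eq, coe_product, Set.mem_prod] at hu ⊢
    obtain ⟨hu, hvu⟩ := hu
    exact ⟨⟨hu.inter hG hs₁ ⟨v, mem_inter.2 ⟨hvu, hv₁⟩⟩, inter_subset_right,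
        mem_inter.2 ⟨hvu, hv₁⟩⟩,
      ⟨hu.inter hG hs₂ ⟨v, mem_inter.2 ⟨hvu, hv₂⟩⟩, inter_subset_right,
        mem_inter.2 ⟨hvu, hv₂⟩⟩⟩
  · rintro ⟨a, b⟩ hab
    simp only [coe_filter, mem_subtrees, Set.mem_ofPred_eq, coe_product, Set.mem_prod] at hab ⊢
    exact ⟨hab.1.1.union hab.2.1 hab.1.2.2 hab.2.2.2, mem_union_left _ hab.1.2.2⟩
  · intro u _
    simp only [← inter_union_distrib_left, hunion, inter_univ]
  · rintro ⟨a, b⟩ hab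
    simp only [coe_filter, mem_subtrees, Set.mem_ofPred_eq, coe_product, Set.mem_prod] at hab
    obtain ⟨⟨-, ha, hva⟩, -, hb, hvb⟩ := hab
    have hcap : ∀ x ∈ s₁, x ∈ s₂ → x = v := fun x h₁ h₂ =>
      mem_singleton.1 (hinter ▸ mem_inter.2 ⟨h₁, h₂⟩)
    refine Prod.ext ?_ ?_ <;> ext x <;> simp only [mem_inter, mem_union] <;> grind

end CutVertex

theorem three_mul_add_le_of_le {a₁ a₂ d₁ d₂ B₁ B₂ : ℕ} (ha₁ : 1 ≤ a₁) (ha₂ : 1 ≤ a₂)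
    (h₁ : 3 * B₁ ≤ (a₁ + 1) * d₁) (h₂ : 3 * B₂ ≤ (a₂ + 1) * d₂) :
    3 * (B₁ + B₂) ≤ (a₁ * a₂ + 1) * (d₁ + d₂) := by
  nlinarith [Nat.mul_le_mul_right d₁ (Nat.le_mul_of_pos_right a₁ ha₂),
    Nat.mul_le_mul_right d₂ (Nat.le_mul_of_pos_left a₂ ha₁)]

theorem NN_ineq_of_union_general
    [Fintype V] [DecidableEq V] (G : SimpleGraph V)
    (hT : G.IsTree) (v : V)
    (s₁ s₂ : Finset V) (hv₁ : v ∈ s₁) (hv₂ : v ∈ s₂)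
    (hc₁ : (G.induce (s₁ : Set V)).Connected) (hc₂ : (G.induce (s₂ : Set V)).Connected)
    (hunion : s₁ ∪ s₂ = Finset.univ) (hinter : s₁ ∩ s₂ = {v})
    (h₁ :
      letI G₁ := G.induce (s₁ : Set V)
      letI r : (s₁ : Set V) := ⟨v, hv₁⟩
      (numSubtreesAt G₁ r : ℤ) * numSubtrees G₁ - (numSubtreesAt G₁ r : ℤ) ^ 2
          + numSubtrees G₁ - numSubtreesAt G₁ r ≥
        3 * ((sumSubtrees G₁ : ℤ) - sumSubtreesAt G₁ r))
    (h₂ :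
      letI G₂ := G.induce (s₂ : Set V)
      letI r : (s₂ : Set V) := ⟨v, hv₂⟩
      (numSubtreesAt G₂ r : ℤ) * numSubtrees G₂ - (numSubtreesAt G₂ r : ℤ) ^ 2
          + numSubtrees G₂ - numSubtreesAt G₂ r ≥
        3 * ((sumSubtrees G₂ : ℤ) - sumSubtreesAt G₂ r)) :
    (numSubtreesAt G v : ℤ) * numSubtrees G - (numSubtreesAt G v : ℤ) ^ 2
        + numSubtrees G - numSubtreesAt G v ≥
      3 * ((sumSubtrees G : ℤ) - sumSubtreesAt G v) := by
  have hG := hT.isAcyclic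
  have h₁ := (subtree_ineq_induce_iff hv₁).1 h₁
  have h₂ := (subtree_ineq_induce_iff hv₂).1 h₂
  have ha (s : Finset V) (hv : v ∈ s) : 1 ≤ #{u ∈ subtrees G | u ⊆ s ∧ v ∈ u} :=
    card_pos.2 ⟨{v}, mem_filter.2 ⟨mem_subtrees.2 (isSubtree_singleton G v),
      singleton_subset_iff.2 hv, mem_singleton_self v⟩⟩
  rw [subtree_ineq_iff, numSubtreesAt_eq_card,
    card_filter_mem_subtrees_eq_mul hG ⟨⟨v, hv₁⟩, hc₁⟩ ⟨⟨v, hv₂⟩, hc₂⟩ hunion hinter,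
    filter_notMem_subtrees_eq_union hG hc₁.preconnected hc₂.preconnected hunion hinter,
    card_union_of_disjoint (disjoint_filter_notMem_subtrees hinter),
    sum_union (disjoint_filter_notMem_subtrees hinter)]
  exact three_mul_add_le_of_le (ha s₁ hv₁) (ha s₂ hv₂) h₁ h₂

/-- if `T = T₁ ∪_v T₂` is the union of two subtrees `T₁, T₂` (each of order
at least 2) meeting exactly in the root `v`, and both `(T₁, v)` and `(T₂, v)` satisfy the
inequality `N_v N_T − N_v² + N_T − N_v ≥ 3(R_T − R_v)`, then so does `(T, v)`. -/
theorem NN_ineq_of_union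
    [Fintype V] [DecidableEq V] (G : SimpleGraph V) [DecidableRel G.Adj]
    (hT : G.IsTree) (v : V) (hdeg : 2 ≤ G.degree v)
    (s₁ s₂ : Finset V) (hv₁ : v ∈ s₁) (hv₂ : v ∈ s₂)
    (hs₁ : 2 ≤ s₁.card) (hs₂ : 2 ≤ s₂.card)
    (hc₁ : (G.induce (s₁ : Set V)).Connected) (hc₂ : (G.induce (s₂ : Set V)).Connected)
    (hunion : s₁ ∪ s₂ = Finset.univ) (hinter : s₁ ∩ s₂ = {v})
    (h₁ :
      letI G₁ := G.induce (s₁ : Set V)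
      letI r : (s₁ : Set V) := ⟨v, hv₁⟩
      (numSubtreesAt G₁ r : ℤ) * numSubtrees G₁ - (numSubtreesAt G₁ r : ℤ) ^ 2
          + numSubtrees G₁ - numSubtreesAt G₁ r ≥
        3 * ((sumSubtrees G₁ : ℤ) - sumSubtreesAt G₁ r))
    (h₂ :
      letI G₂ := G.induce (s₂ : Set V)
      letI r : (s₂ : Set V) := ⟨v, hv₂⟩
      (numSubtreesAt G₂ r : ℤ) * numSubtrees G₂ - (numSubtreesAt G₂ r : ℤ) ^ 2
          + numSubtrees G₂ - numSubtreesAt G₂ r ≥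
        3 * ((sumSubtrees G₂ : ℤ) - sumSubtreesAt G₂ r)) :
    (numSubtreesAt G v : ℤ) * numSubtrees G - (numSubtreesAt G v : ℤ) ^ 2
        + numSubtrees G - numSubtreesAt G v ≥
      3 * ((sumSubtrees G : ℤ) - sumSubtreesAt G v) :=
  NN_ineq_of_union_general G hT v s₁ s₂ hv₁ hv₂ hc₁ hc₂ hunion hinter h₁ h₂
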